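/- arXiv:1005.0937 — 6 statements merged into one kernel-verified Lean document; each statement's English description precedes it below -/
import Mathlib

section
/- For real-valued continuous functions f, g on a compact space X with the sup norm, max(‖f+g‖, ‖f−g‖) = ‖|f|+|g|‖, where |f|+|g| denotes the pointwise function x ↦ |f(x)|+|g(x)|. -/
lemma max_abs_eq (a b : ℝ) : max |a + b| |a - b| = |a| + |b| := by
  rcases abs_cases a with ⟨ha, ha'⟩ | ⟨ha, ha'⟩ <;>
  rcases abs_cases b with ⟨hb, hb'⟩ | ⟨hb, hb'⟩ <;>
  rcases abs_cases (a + b) with ⟨h1, h1'⟩ | ⟨h1, h1'⟩ <;>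
  rcases abs_cases (a - b) with ⟨h2, h2'⟩ | ⟨h2, h2'⟩ <;>
  rcases max_cases |a + b| |a - b| with ⟨hm, _⟩ | ⟨hm, _⟩ <;>
  rw [hm] <;> linarith

/-- For continuous real-valued functions `f`, `g` on a compact space `X` with the sup norm,
`max ‖f + g‖ ‖f - g‖ = ‖|f| + |g|‖`. -/
theorem stmt_0 {X : Type} [TopologicalSpace X] [CompactSpace X] [Nonempty X]
    (f g : C(X, ℝ)) :
    max ‖f + g‖ ‖f - g‖ = ‖|f| + |g|‖ := by
  have key : ∀ x, ‖(|f| + |g|) x‖ = |f x| + |g x| := by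
    intro x
    simp only [ContinuousMap.add_apply, ContinuousMap.abs_apply, Real.norm_eq_abs]
    exact abs_of_nonneg (by positivity)
  apply le_antisymm
  · apply max_le <;> rw [ContinuousMap.norm_le_of_nonempty] <;> intro x
    · calc ‖(f + g) x‖ ≤ |f x| + |g x| := by
            simp only [ContinuousMap.add_apply, Real.norm_eq_abs]; exact abs_add_le _ _
        _ = ‖(|f| + |g|) x‖ := (key x).symm
        _ ≤ _ := ContinuousMap.norm_coe_le_norm _ x
    · calc ‖(f - g) x‖ ≤ |f x| + |g x| := by
            simp only [ContinuousMap.sub_apply, Real.norm_eq_abs]; exact abs_sub _ _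
        _ = ‖(|f| + |g|) x‖ := (key x).symm
        _ ≤ _ := ContinuousMap.norm_coe_le_norm _ x
  · rw [ContinuousMap.norm_le_of_nonempty]
    intro x
    rw [key x, ← max_abs_eq (f x) (g x)]
    apply max_le
    · exact le_max_of_le_left (ContinuousMap.norm_coe_le_norm (f + g) x)
    · exact le_max_of_le_right (ContinuousMap.norm_coe_le_norm (f - g) x)
end

section
/- If there exists a coarse (M,L)-quasi isometry between Banach spaces E and F, then the net distance satisfies d_N(E,F) ≤ M². -/
/-!
Restrict `T` to a maximal `δ`-separated set `N ⊆ E`. Once `δ > ML`, the additive error `L` is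
dominated by `(L / δ) · dist` on `N`, so `T` is `(M + L / δ)`-Lipschitz on `N` with
`(M⁻¹ - L / δ)⁻¹`-Lipschitz inverse, and `T(N)` is a net of `F` because `T(E)` is `ξ`-dense.
The product of the two constants tends to `M²` as `δ → ∞`.
-/

/-- `N` is an `(ε, δ)`-net in the metric space `E`: it is `ε`-dense and `δ`-separated. -/
def IsNetIn {E : Type} [MetricSpace E] (N : Set E) (ε δ : ℝ) : Prop :=
  (∀ x : E, ∃ n ∈ N, dist x n ≤ ε) ∧ ∀ a ∈ N, ∀ b ∈ N, a ≠ b → δ ≤ dist a b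

/-- The set of products `l(T) * l(T⁻¹)` over bi-Lipschitz bijections `T` between nets of `E`
and `F`. -/
def netDistSet (E F : Type) [MetricSpace E] [MetricSpace F] : Set ℝ :=
  { c | ∃ (NE : Set E) (NF : Set F) (ε₁ δ₁ ε₂ δ₂ : ℝ), 0 < ε₁ ∧ 0 < δ₁ ∧ 0 < ε₂ ∧ 0 < δ₂ ∧
      IsNetIn NE ε₁ δ₁ ∧ IsNetIn NF ε₂ δ₂ ∧
      ∃ (T : NE → NF) (K K' : ℝ), Function.Bijective T ∧ 0 < K ∧ 0 < K' ∧
        (∀ a b : NE, dist (T a : F) (T b : F) ≤ K * dist (a : E) (b : E)) ∧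
        (∀ a b : NE, dist (a : E) (b : E) ≤ K' * dist (T a : F) (T b : F)) ∧
        c = K * K' }

/-- The net distance between Banach spaces `E` and `F`. -/
noncomputable def netDist (E F : Type) [MetricSpace E] [MetricSpace F] : ℝ :=
  sInf (netDistSet E F)

open Set Filter Topology

lemma netDistSet_bddBelow (E F : Type) [MetricSpace E] [MetricSpace F] :
    BddBelow (netDistSet E F) := by
  refine ⟨0, ?_⟩
  rintro _ ⟨-, -, -, -, -, -, -, -, -, -, -, -, -, K, K', -, hK, hK', -, -, rfl⟩
  positivity

/-- A maximal `δ`-separated set is `δ`-dense. -/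
lemma exists_isNetIn {E : Type} [MetricSpace E] {δ : ℝ} (hδ : 0 ≤ δ) :
    ∃ N : Set E, IsNetIn N δ δ := by
  obtain ⟨N, hN⟩ := zorn_subset {S : Set E | S.Pairwise (δ ≤ dist · ·)} fun c hcS hc =>
    ⟨⋃₀ c, hc.pairwise_sUnion.2 hcS, fun _ => subset_sUnion_of_mem⟩
  refine ⟨N, fun x => ?_, fun a ha b hb hab => hN.prop ha hb hab⟩
  by_contra! hfar
  have hins : insert x N ∈ {S : Set E | S.Pairwise (δ ≤ dist · ·)} :=
    hN.prop.insert fun b hb _ => ⟨(hfar b hb).le, dist_comm x b ▸ (hfar b hb).le⟩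
  have hx : x ∈ N := hN.le_of_ge hins (subset_insert x N) (mem_insert x N)
  linarith [hfar x hx, dist_self x]

lemma le_div_mul_of_le {L δ t : ℝ} (hL : 0 ≤ L) (hδ : 0 < δ) (ht : δ ≤ t) : L ≤ L / δ * t :=
  calc L = L / δ * δ := (div_mul_cancel₀ L hδ.ne').symm
    _ ≤ L / δ * t := by gcongr

section CoarseMaps

variable {E F : Type} [MetricSpace E] [MetricSpace F] {T : E → F} {M L δ : ℝ} {N : Set E}

lemma dist_le_of_pairwise_le_dist (hup : ∀ x y, dist (T x) (T y) ≤ M * dist x y + L)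
    (hL : 0 ≤ L) (hδ : 0 < δ) (hN : N.Pairwise (δ ≤ dist · ·)) {a b : E} (ha : a ∈ N)
    (hb : b ∈ N) : dist (T a) (T b) ≤ (M + L / δ) * dist a b := by
  obtain rfl | hab := eq_or_ne a b
  · simp
  have hLab := le_div_mul_of_le hL hδ (hN ha hb hab)
  linarith [hup a b]

lemma le_dist_of_pairwise_le_dist (hlow : ∀ x y, dist x y / M - L ≤ dist (T x) (T y))
    (hL : 0 ≤ L) (hδ : 0 < δ) (hN : N.Pairwise (δ ≤ dist · ·)) {a b : E} (ha : a ∈ N)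
    (hb : b ∈ N) : (M⁻¹ - L / δ) * dist a b ≤ dist (T a) (T b) := by
  obtain rfl | hab := eq_or_ne a b
  · simp
  have hLab := le_div_mul_of_le hL hδ (hN ha hb hab)
  have := hlow a b
  rw [div_eq_inv_mul] at this
  linarith

lemma injOn_of_pairwise_le_dist (hlow : ∀ x y, dist x y / M - L ≤ dist (T x) (T y))
    (hL : 0 ≤ L) (hδ : 0 < δ) (hc : 0 < M⁻¹ - L / δ) (hN : N.Pairwise (δ ≤ dist · ·)) :
    InjOn T N := fun a ha b hb hab => by
  have := le_dist_of_pairwise_le_dist hlow hL hδ hN ha hb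
  rw [hab, dist_self] at this
  exact dist_le_zero.1 (nonpos_of_mul_nonpos_right this hc)

lemma isNetIn_image {ε ξ : ℝ} (hM : 0 ≤ M) (hlow : ∀ x y, dist x y / M - L ≤ dist (T x) (T y))
    (hup : ∀ x y, dist (T x) (T y) ≤ M * dist x y + L) (hdense : ∀ z, ∃ x, dist z (T x) ≤ ξ)
    (hN : IsNetIn N ε δ) : IsNetIn (T '' N) (ξ + (M * ε + L)) (δ / M - L) := by
  refine ⟨fun z => ?_, ?_⟩
  · obtain ⟨x, hx⟩ := hdense z
    obtain ⟨n, hn, hxn⟩ := hN.1 x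
    refine ⟨T n, mem_image_of_mem T hn, ?_⟩
    calc dist z (T n) ≤ dist z (T x) + dist (T x) (T n) := dist_triangle _ _ _
      _ ≤ ξ + (M * ε + L) := add_le_add hx ((hup x n).trans (by gcongr))
  · rintro _ ⟨a, ha, rfl⟩ _ ⟨b, hb, rfl⟩ hab
    calc δ / M - L ≤ dist a b / M - L := by gcongr; exact hN.2 a ha b hb (ne_of_apply_ne T hab)
      _ ≤ dist (T a) (T b) := hlow a b

lemma mem_netDistSet_of_coarse {ξ : ℝ} (hM : 0 < M) (hL : 0 ≤ L) (hξ : 0 ≤ ξ)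
    (hlow : ∀ x y, dist x y / M - L ≤ dist (T x) (T y))
    (hup : ∀ x y, dist (T x) (T y) ≤ M * dist x y + L) (hdense : ∀ z, ∃ x, dist z (T x) ≤ ξ)
    (hδ : M * L < δ) : (M + L / δ) * (M⁻¹ - L / δ)⁻¹ ∈ netDistSet E F := by
  have hδpos : 0 < δ := (mul_nonneg hM.le hL).trans_lt hδ
  have hsep : 0 < δ / M - L := sub_pos.2 ((lt_div_iff₀ hM).2 (by linarith))
  have hc : 0 < M⁻¹ - L / δ := by
    rw [sub_pos, div_lt_iff₀ hδpos, inv_mul_eq_div]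
    exact sub_pos.1 hsep
  obtain ⟨N, hN⟩ := exists_isNetIn (E := E) hδpos.le
  refine ⟨N, T '' N, δ, δ, ξ + (M * δ + L), δ / M - L, hδpos, hδpos, by positivity, hsep, hN,
    isNetIn_image hM.le hlow hup hdense hN, imageFactorization T N, M + L / δ, (M⁻¹ - L / δ)⁻¹,
    ⟨(injOn_of_pairwise_le_dist hlow hL hδpos hc hN.2).imageFactorization_injective,
      imageFactorization_surjective⟩, by positivity, inv_pos.2 hc,
    fun a b => dist_le_of_pairwise_le_dist hup hL hδpos hN.2 a.2 b.2,
    fun a b => (le_inv_mul_iff₀ hc).2 (le_dist_of_pairwise_le_dist hlow hL hδpos hN.2 a.2 b.2),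
    rfl⟩

theorem netDist_le_sq_of_coarse {ξ : ℝ} (hM : 0 < M) (hL : 0 ≤ L) (hξ : 0 ≤ ξ)
    (hlow : ∀ x y, dist x y / M - L ≤ dist (T x) (T y))
    (hup : ∀ x y, dist (T x) (T y) ≤ M * dist x y + L) (hdense : ∀ z, ∃ x, dist z (T x) ≤ ξ) :
    netDist E F ≤ M ^ 2 := by
  have hlim : Tendsto (fun δ => (M + L / δ) * (M⁻¹ - L / δ)⁻¹) atTop (𝓝 (M ^ 2)) := by
    have h0 : Tendsto (fun δ : ℝ => L / δ) atTop (𝓝 0) := tendsto_const_nhds.div_atTop tendsto_id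
    convert (tendsto_const_nhds.add h0).mul ((tendsto_const_nhds.sub h0).inv₀ _) using 2
    · simp [sq]
    · simpa using hM.ne'
  refine ge_of_tendsto hlim ((eventually_gt_atTop (M * L)).mono fun δ hδ => ?_)
  exact csInf_le (netDistSet_bddBelow E F) (mem_netDistSet_of_coarse hM hL hξ hlow hup hdense hδ)

end CoarseMaps

theorem stmt_5_general {E F : Type} [NormedAddCommGroup E] [NormedAddCommGroup F]
    (M L ξ : ℝ) (hM : 0 < M) (hL : 0 ≤ L) (hξ : 0 ≤ ξ)
    (T : E → F)
    (hTlow : ∀ x y : E, (1 / M) * ‖x - y‖ - L ≤ ‖T x - T y‖)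
    (hTup : ∀ x y : E, ‖T x - T y‖ ≤ M * ‖x - y‖ + L)
    (hTdense : ∀ z : F, ∃ x : E, ‖z - T x‖ ≤ ξ) :
    netDist E F ≤ M ^ 2 := by
  refine netDist_le_sq_of_coarse (T := T) hM hL hξ (fun x y => ?_) (fun x y => ?_) (fun z => ?_)
  · simpa only [dist_eq_norm, one_div, inv_mul_eq_div] using hTlow x y
  · simpa only [dist_eq_norm] using hTup x y
  · simpa only [dist_eq_norm] using hTdense z

/-- If there is a coarse `(M,L)`-quasi isometry between Banach spaces `E` and `F`, then
`d_N(E, F) ≤ M²`. -/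
theorem stmt_5 {E F : Type} [NormedAddCommGroup E] [NormedSpace ℝ E] [CompleteSpace E]
    [NormedAddCommGroup F] [NormedSpace ℝ F] [CompleteSpace F]
    (M L ξ : ℝ) (hM : 0 < M) (hL : 0 ≤ L) (hξ : 0 ≤ ξ)
    (T : E → F)
    (hTlow : ∀ x y : E, (1 / M) * ‖x - y‖ - L ≤ ‖T x - T y‖)
    (hTup : ∀ x y : E, ‖T x - T y‖ ≤ M * ‖x - y‖ + L)
    (hTdense : ∀ z : F, ∃ x : E, ‖z - T x‖ ≤ ξ) :
    netDist E F ≤ M ^ 2 :=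
  stmt_5_general M L ξ hM hL hξ T hTlow hTup hTdense
end

section
/- Let T : C(X) → C(Y) be a bijective map with T(0) = 0 satisfying (1/M)‖f−g‖ − L ≤ ‖Tf − Tg‖ ≤ M‖f−g‖ + L for all f, g, where 1 ≤ M < √2, and suppose T⁻¹ satisfies the same inequalities. Fix D with 0 < D < 2/M − M. Then there exists m₀ ≥ 0 (depending only on M, L, D; with m₀ = 0 when L = 0) such that for all m > m₀ and all x ∈ X there exist a net (f_σ) of functions in C(X) with ‖f_σ‖ = |f_σ(x)| = m and f_σ → 0 uniformly on the complement of every open neighborhood of x, and points y_σ ∈ Y converging to some y ∈ Y, such that Tf_σ(y_σ) ≥ Dm and T(−f_σ)(y_σ) ≤ −Dm for all σ. -/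
open Filter Topology

/-- A bundled nonempty directed index set (for Moore–Smith nets). -/
structure DirIndex : Type 1 where
  ι : Type
  [pre : Preorder ι]
  [dir : IsDirected ι (· ≤ ·)]
  [ne : Nonempty ι]

attribute [instance] DirIndex.pre DirIndex.dir DirIndex.ne

/-- `f` is an `m`-peak net at `x`: `‖f σ‖ = |f σ x| = m` for all `σ`, and `f σ → 0`
uniformly on the complement of every open neighborhood of `x`. -/
def IsPeakNet {X : Type} [TopologicalSpace X] [CompactSpace X] (I : DirIndex)
    (f : I.ι → C(X, ℝ)) (m : ℝ) (x : X) : Prop :=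
  (∀ σ, ‖f σ‖ = m ∧ |f σ x| = m) ∧
  ∀ U : Set X, IsOpen U → x ∈ U →
    TendstoUniformlyOn (fun σ => ⇑(f σ)) 0 atTop Uᶜ

/-- The set `S^D_m(x) ⊆ Y`: limits `y` of nets `y_σ` such that some `m`-peak net `f_σ` at `x`
satisfies `T f_σ (y_σ) ≥ D m` and `T (-f_σ) (y_σ) ≤ -D m`. -/
def SD {X Y : Type} [TopologicalSpace X] [CompactSpace X] [TopologicalSpace Y]
    (T : C(X, ℝ) → C(Y, ℝ)) (D m : ℝ) (x : X) : Set Y :=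
  { y | ∃ (I : DirIndex) (f : I.ι → C(X, ℝ)) (yσ : I.ι → Y),
      IsPeakNet I f m x ∧ Tendsto yσ atTop (𝓝 y) ∧
      ∀ σ, D * m ≤ T (f σ) (yσ σ) ∧ T (-(f σ)) (yσ σ) ≤ -(D * m) }

/-!
Write `g = T f` and `h = T (-f)` for a function `f` of norm `m`. The lower bound gives
`‖g - h‖ ≥ 2m/M - L`, while `T 0 = 0` and the upper bound give `‖g‖, ‖h‖ ≤ Mm + L`. At a point
`y` where `|g y - h y|` is close to `‖g - h‖`, one of `g y`, `h y` is therefore at least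
`2m/M - Mm - 2L ≥ Dm` and the other at most `-Dm`; replacing `f` by `-f` if necessary puts the
large value at `T f`. Doing this for Urysohn bumps at `x` supported in smaller and smaller
neighbourhoods of `x` and passing to a cluster point of the witnesses `y` in the compact space `Y`
yields a point of `S^D_m(x)`.
-/

instance Prod.isDirected_le {α β : Type*} [Preorder α] [Preorder β] [IsDirected α (· ≤ ·)]
    [IsDirected β (· ≤ ·)] : IsDirected (α × β) (· ≤ ·) :=
  ⟨fun a b =>
    let ⟨c, hac, hbc⟩ := directed_of (· ≤ ·) a.1 b.1
    let ⟨d, had, hbd⟩ := directed_of (· ≤ ·) a.2 b.2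
    ⟨(c, d), ⟨hac, had⟩, ⟨hbc, hbd⟩⟩⟩

structure FilterIdx {α : Type} (l : Filter α) : Type where
  set : Set α
  mem : set ∈ l

namespace FilterIdx

variable {α : Type} {l : Filter α}

instance : Preorder (FilterIdx l) where
  le s t := t.set ⊆ s.set
  le_refl _ := subset_rfl
  le_trans _ _ _ h₁ h₂ := h₂.trans h₁

instance : IsDirected (FilterIdx l) (· ≤ ·) :=
  ⟨fun s t =>
    ⟨⟨s.set ∩ t.set, inter_mem s.mem t.mem⟩, Set.inter_subset_left, Set.inter_subset_right⟩⟩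

instance : Nonempty (FilterIdx l) := ⟨⟨Set.univ, univ_mem⟩⟩

theorem eventually_subset {s : Set α} (hs : s ∈ l) : ∀ᶠ t : FilterIdx l in atTop, t.set ⊆ s :=
  eventually_ge_atTop (FilterIdx.mk s hs)

end FilterIdx

theorem exists_forall_inter_nonempty_of_monotone {α Y : Type*} [TopologicalSpace Y]
    [CompactSpace Y] {l : Filter α} {W : Set α → Set Y} (hW : Monotone W)
    (hne : ∀ U ∈ l, (W U).Nonempty) : ∃ y₀, ∀ U ∈ l, ∀ N ∈ 𝓝 y₀, (W U ∩ N).Nonempty := by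
  have := (lift'_neBot_iff hW).2 hne
  obtain ⟨y₀, hy₀⟩ := exists_clusterPt_of_compactSpace (l.lift' W)
  exact ⟨y₀, fun U hU N hN => Set.inter_comm N _ ▸ clusterPt_iff_nonempty.1 hy₀ hN (mem_lift' hU)⟩

theorem exists_bump {X : Type} [TopologicalSpace X] [T4Space X] [CompactSpace X] {x : X}
    {U : Set X} (hU : U ∈ 𝓝 x) {m : ℝ} (hm : 0 ≤ m) :
    ∃ f : C(X, ℝ), ‖f‖ = m ∧ f x = m ∧ Set.EqOn f 0 Uᶜ := by
  obtain ⟨g, hg0, hg1, hg01⟩ := exists_continuous_zero_one_of_isClosed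
    isOpen_interior.isClosed_compl isClosed_singleton
    (Set.disjoint_singleton_right.2 (not_not.2 (mem_interior_iff_mem_nhds.2 hU)))
  have hgx : g x = 1 := hg1 rfl
  refine ⟨m • g, le_antisymm ?_ ?_, by simp [hgx], fun z hz => ?_⟩
  · refine ((m • g).norm_le hm).2 fun z => ?_
    have := hg01 z
    rw [ContinuousMap.smul_apply, norm_smul, Real.norm_of_nonneg hm, Real.norm_of_nonneg this.1]
    exact mul_le_of_le_one_right hm this.2
  · simpa [hgx, abs_of_nonneg hm] using (m • g).norm_coe_le_norm x
  · simp [hg0 (fun h => hz (interior_subset h))]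

theorem ContinuousMap.exists_opposite_values_of_lt_norm_sub {Y : Type} [TopologicalSpace Y]
    [CompactSpace Y] {g h : C(Y, ℝ)} {c d : ℝ} (hd : 0 ≤ d) (hg : ‖g‖ ≤ c) (hh : ‖h‖ ≤ c)
    (hgh : d + c < ‖g - h‖) : ∃ y, (d ≤ g y ∧ h y ≤ -d) ∨ (d ≤ h y ∧ g y ≤ -d) := by
  obtain ⟨y, hy⟩ : ∃ y, d + c < |g y - h y| := by
    by_contra! hle
    exact hgh.not_ge (((g - h).norm_le (by linarith [norm_nonneg g])).2 hle)
  have hgy := abs_le.1 (((g.norm_coe_le_norm y).trans hg).trans_eq' (Real.norm_eq_abs _).symm)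
  have hhy := abs_le.1 (((h.norm_coe_le_norm y).trans hh).trans_eq' (Real.norm_eq_abs _).symm)
  rcases lt_abs.1 hy with hy | hy
  · exact ⟨y, .inl ⟨by linarith, by linarith⟩⟩
  · exact ⟨y, .inr ⟨by linarith, by linarith⟩⟩

theorem exists_sign_witness {E Y : Type} [NormedAddCommGroup E] [NormedSpace ℝ E]
    [TopologicalSpace Y] [CompactSpace Y] {T : E → C(Y, ℝ)} {M L D : ℝ} (h0 : T 0 = 0)
    (hlow : ∀ f g : E, (1 / M) * ‖f - g‖ - L ≤ ‖T f - T g‖)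
    (hup : ∀ f g : E, ‖T f - T g‖ ≤ M * ‖f - g‖ + L) (hD : 0 ≤ D) (f : E)
    (hf : D * ‖f‖ + (M * ‖f‖ + L) < 1 / M * (2 * ‖f‖) - L) :
    ∃ g ∈ ({f, -f} : Set E), ∃ y, D * ‖f‖ ≤ T g y ∧ T (-g) y ≤ -(D * ‖f‖) := by
  have hbound : ∀ g, ‖T g‖ ≤ M * ‖g‖ + L := fun g => by simpa [h0] using hup g 0
  have hsep : 1 / M * (2 * ‖f‖) - L ≤ ‖T f - T (-f)‖ := by
    simpa [sub_neg_eq_add, ← two_smul ℝ f, norm_smul] using hlow f (-f)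
  obtain ⟨y, ⟨h₁, h₂⟩ | ⟨h₁, h₂⟩⟩ := ContinuousMap.exists_opposite_values_of_lt_norm_sub
    (mul_nonneg hD (norm_nonneg f)) (hbound f) (norm_neg f ▸ hbound (-f)) (hf.trans_le hsep)
  · exact ⟨f, .inl rfl, y, h₁, h₂⟩
  · exact ⟨-f, .inr rfl, y, h₁, by rwa [neg_neg]⟩

section PeakWitnesses

variable {X Y : Type} [TopologicalSpace X] [CompactSpace X] [TopologicalSpace Y]

def peakWitnesses (T : C(X, ℝ) → C(Y, ℝ)) (D m : ℝ) (x : X) (U : Set X) : Set Y :=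
  {y | ∃ f : C(X, ℝ), ‖f‖ = m ∧ |f x| = m ∧ Set.EqOn f 0 Uᶜ ∧
    D * m ≤ T f y ∧ T (-f) y ≤ -(D * m)}

theorem peakWitnesses_mono (T : C(X, ℝ) → C(Y, ℝ)) (D m : ℝ) (x : X) :
    Monotone (peakWitnesses T D m x) :=
  fun _ _ hUV _ ⟨f, hfn, hfx, hf0, hf⟩ => ⟨f, hfn, hfx, hf0.mono (Set.compl_subset_compl.2 hUV), hf⟩

theorem peakWitnesses_nonempty [T2Space X] [CompactSpace Y] {T : C(X, ℝ) → C(Y, ℝ)}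
    {M L D : ℝ} (h0 : T 0 = 0)
    (hlow : ∀ f g : C(X, ℝ), (1 / M) * ‖f - g‖ - L ≤ ‖T f - T g‖)
    (hup : ∀ f g : C(X, ℝ), ‖T f - T g‖ ≤ M * ‖f - g‖ + L) (hD : 0 ≤ D) {m : ℝ} (hm : 0 ≤ m)
    (hthr : D * m + (M * m + L) < 1 / M * (2 * m) - L) {x : X} {U : Set X} (hU : U ∈ 𝓝 x) :
    (peakWitnesses T D m x U).Nonempty := by
  obtain ⟨f, hfn, hfx, hf0⟩ := exists_bump hU hm
  obtain ⟨g, hg, y, hy⟩ := exists_sign_witness h0 hlow hup hD f (hfn ▸ hthr)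
  have hgf : ‖g‖ = ‖f‖ ∧ |g x| = |f x| ∧ Set.EqOn g 0 Uᶜ := by
    rcases hg with rfl | rfl
    · exact ⟨rfl, rfl, hf0⟩
    · exact ⟨norm_neg f, abs_neg _, fun z hz => by simp [hf0 hz]⟩
  exact ⟨y, g, hgf.1.trans hfn, by rw [hgf.2.1, hfx, abs_of_nonneg hm], hgf.2.2, hfn ▸ hy⟩

theorem mem_SD_of_forall_inter_peakWitnesses_nonempty {T : C(X, ℝ) → C(Y, ℝ)} {D m : ℝ}
    {x : X} {y₀ : Y} (h : ∀ U ∈ 𝓝 x, ∀ N ∈ 𝓝 y₀, (peakWitnesses T D m x U ∩ N).Nonempty) :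
    y₀ ∈ SD T D m x := by
  choose yσ hyσ using fun p : FilterIdx (𝓝 x) × FilterIdx (𝓝 y₀) => h _ p.1.mem _ p.2.mem
  choose f hfn hfx hf0 hge hle using fun p => (hyσ p).1
  refine ⟨⟨FilterIdx (𝓝 x) × FilterIdx (𝓝 y₀)⟩, f, yσ, ⟨fun p => ⟨hfn p, hfx p⟩, ?_⟩, ?_,
    fun p => ⟨hge p, hle p⟩⟩
  · intro U hU hxU
    rw [← prod_atTop_atTop_eq]
    refine (tendsto_const_nhds.tendstoUniformlyOn_const Uᶜ).congr
      (((FilterIdx.eventually_subset (hU.mem_nhds hxU)).prod_inl _).mono fun p hp => ?_)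
    exact ((hf0 p).mono (Set.compl_subset_compl.2 hp)).symm
  · intro N hN
    rw [← prod_atTop_atTop_eq]
    exact ((FilterIdx.eventually_subset hN).prod_inr _).mono fun p hp => hp (hyσ p).2

end PeakWitnesses

theorem stmt_6_general {X Y : Type} [TopologicalSpace X] [CompactSpace X] [T2Space X]
    [TopologicalSpace Y] [CompactSpace Y]
    (M L D : ℝ) (hM1 : 1 ≤ M) (hL : 0 ≤ L)
    (hD0 : 0 < D) (hD : D < 2 / M - M)
    (T : C(X, ℝ) → C(Y, ℝ))
    (h0 : T 0 = 0)
    (hTlow : ∀ f g : C(X, ℝ), (1 / M) * ‖f - g‖ - L ≤ ‖T f - T g‖)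
    (hTup : ∀ f g : C(X, ℝ), ‖T f - T g‖ ≤ M * ‖f - g‖ + L) :
    ∃ m₀ : ℝ, 0 ≤ m₀ ∧ (L = 0 → m₀ = 0) ∧
      ∀ m : ℝ, m₀ < m → ∀ x : X, (SD T D m x).Nonempty := by
  have hM0 : 0 < M := by linarith
  have hgap : 0 < 2 - M * M - D * M := by
    have := (lt_div_iff₀ hM0).1 (by linarith : D + M < 2 / M)
    linarith
  refine ⟨2 * L * M / (2 - M * M - D * M), by positivity, fun hL0 => by simp [hL0],
    fun m hm x => ?_⟩
  have hm0 : 0 ≤ m := le_trans (by positivity) hm.le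
  have hthr : D * m + (M * m + L) < 1 / M * (2 * m) - L := by
    rw [div_lt_iff₀ hgap] at hm
    rw [← sub_pos]
    field_simp
    nlinarith
  obtain ⟨y₀, hy₀⟩ := exists_forall_inter_nonempty_of_monotone (peakWitnesses_mono T D m x)
    fun U hU => peakWitnesses_nonempty h0 hTlow hTup hD0.le hm0 hthr hU
  exact ⟨y₀, mem_SD_of_forall_inter_peakWitnesses_nonempty hy₀⟩

/-- Non-emptiness of `S^D_m(x)` for `m` large. -/
theorem stmt_6 {X Y : Type} [TopologicalSpace X] [CompactSpace X] [T2Space X]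
    [TopologicalSpace Y] [CompactSpace Y] [T2Space Y]
    (M L D : ℝ) (hM1 : 1 ≤ M) (hM2 : M < Real.sqrt 2) (hL : 0 ≤ L)
    (hD0 : 0 < D) (hD : D < 2 / M - M)
    (T : C(X, ℝ) → C(Y, ℝ)) (T' : C(Y, ℝ) → C(X, ℝ))
    (hbij : Function.Bijective T) (h0 : T 0 = 0)
    (hinv₁ : Function.LeftInverse T' T) (hinv₂ : Function.RightInverse T' T)
    (hTlow : ∀ f g : C(X, ℝ), (1 / M) * ‖f - g‖ - L ≤ ‖T f - T g‖)
    (hTup : ∀ f g : C(X, ℝ), ‖T f - T g‖ ≤ M * ‖f - g‖ + L)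
    (hT'low : ∀ f g : C(Y, ℝ), (1 / M) * ‖f - g‖ - L ≤ ‖T' f - T' g‖)
    (hT'up : ∀ f g : C(Y, ℝ), ‖T' f - T' g‖ ≤ M * ‖f - g‖ + L) :
    ∃ m₀ : ℝ, 0 ≤ m₀ ∧ (L = 0 → m₀ = 0) ∧
      ∀ m : ℝ, m₀ < m → ∀ x : X, (SD T D m x).Nonempty :=
  stmt_6_general M L D hM1 hL hD0 hD T h0 hTlow hTup
end

section
/- In the setting of the coarse Banach-Stone setup (T : C(X) → C(Y) bijective with T(0)=0, both T and T⁻¹ coarse (M,L)-quasi isometries, 0 < D < 2/M − M, m₀ as in the non-emptiness fact), for every m > m₀, every f ∈ C(X) with ‖f‖ ≤ m, every x ∈ X and every y ∈ S^D_m(x), one has |Tf(y)| ≤ |f(x)| + ε(M)·m + L, where ε(M) = 2M − 1 − D. -/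
open Filter Topology

/-- The one-sided estimate `|Tf(y)| ≤ |f(x)| + ε(M) m + L` for `y ∈ S^D_m(x)`,
where `ε(M) = 2M - 1 - D`. -/
theorem stmt_7 {X Y : Type} [TopologicalSpace X] [CompactSpace X] [T2Space X]
    [TopologicalSpace Y] [CompactSpace Y] [T2Space Y]
    (M L D : ℝ) (hM1 : 1 ≤ M) (hM2 : M < Real.sqrt 2) (hL : 0 ≤ L)
    (hD0 : 0 < D) (hD : D < 2 / M - M)
    (T : C(X, ℝ) → C(Y, ℝ)) (T' : C(Y, ℝ) → C(X, ℝ))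
    (hbij : Function.Bijective T) (h0 : T 0 = 0)
    (hinv₁ : Function.LeftInverse T' T) (hinv₂ : Function.RightInverse T' T)
    (hTlow : ∀ f g : C(X, ℝ), (1 / M) * ‖f - g‖ - L ≤ ‖T f - T g‖)
    (hTup : ∀ f g : C(X, ℝ), ‖T f - T g‖ ≤ M * ‖f - g‖ + L)
    (hT'low : ∀ f g : C(Y, ℝ), (1 / M) * ‖f - g‖ - L ≤ ‖T' f - T' g‖)
    (hT'up : ∀ f g : C(Y, ℝ), ‖T' f - T' g‖ ≤ M * ‖f - g‖ + L)
    (m₀ : ℝ) (hm₀ : 0 ≤ m₀)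
    (hm₀ne : ∀ m : ℝ, m₀ < m → ∀ x : X, (SD T D m x).Nonempty) :
    ∀ m : ℝ, m₀ < m → ∀ f : C(X, ℝ), ‖f‖ ≤ m → ∀ x : X, ∀ y ∈ SD T D m x,
      |T f y| ≤ |f x| + (2 * M - 1 - D) * m + L := by
  intro m hm f hf x y hy
  obtain ⟨I, fσ, yσ, ⟨hpeak, hunif⟩, hconv, hineq⟩ := hy
  haveI : (atTop : Filter I.ι).NeBot := atTop_neBot_iff.mpr ⟨I.ne, I.dir⟩
  have hm0 : (0:ℝ) ≤ m := le_trans hm₀ hm.le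
  have hfx0 : (0:ℝ) ≤ |f x| := abs_nonneg _
  have hfx : |f x| ≤ m := le_trans (f.norm_coe_le_norm x) hf
  have hMpos : (0:ℝ) < M := lt_of_lt_of_le one_pos hM1
  have key : ∀ δ : ℝ, 0 < δ → |T f y| ≤ M * (|f x| + m + δ) - D * m + L := by
    intro δ hδ
    set U : Set X := {z | |f z - f x| < δ} with hU
    have hUopen : IsOpen U := by
      have hc : Continuous fun z => |f z - f x| :=
        (f.continuous.sub continuous_const).abs
      exact isOpen_lt hc continuous_const
    have hxU : x ∈ U := by simp [hU, hδ]
    have hev : ∀ᶠ σ in atTop, ∀ z ∈ Uᶜ, |fσ σ z| < δ := by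
      filter_upwards [Metric.tendstoUniformlyOn_iff.mp (hunif U hUopen hxU) δ hδ] with σ hσ z hz
      simpa [Real.dist_eq, abs_sub_comm] using hσ z hz
    have hbound : ∀ᶠ σ in atTop, |T f (yσ σ)| ≤ M * (|f x| + m + δ) - D * m + L := by
      filter_upwards [hev] with σ hσ
      set B := |f x| + m + δ with hBdef
      have hB : 0 ≤ B := by positivity
      have hnm : ‖fσ σ‖ = m := (hpeak σ).1
      have pt : ∀ z : X, |f z| + |fσ σ z| ≤ B := by
        intro z
        by_cases hz : z ∈ U
        · have h1 : |f z| - |f x| ≤ |f z - f x| := abs_sub_abs_le_abs_sub _ _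
          have h2 : |f z - f x| < δ := hz
          have h3 : |fσ σ z| ≤ m := by
            simpa [hnm] using (fσ σ).norm_coe_le_norm z
          simp only [hBdef]; linarith
        · have h2 : |fσ σ z| < δ := hσ z hz
          have h3 : |f z| ≤ m := le_trans (f.norm_coe_le_norm z) hf
          simp only [hBdef]; linarith
      have h1 : ‖f - fσ σ‖ ≤ B := by
        rw [ContinuousMap.norm_le _ hB]
        intro z
        have := pt z
        have habs : |f z - fσ σ z| ≤ |f z| + |fσ σ z| := abs_sub _ _
        simp only [ContinuousMap.sub_apply, Real.norm_eq_abs]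
        linarith
      have h2 : ‖f - -(fσ σ)‖ ≤ B := by
        rw [ContinuousMap.norm_le _ hB]
        intro z
        have := pt z
        have habs : |f z + fσ σ z| ≤ |f z| + |fσ σ z| := abs_add_le _ _
        simp only [ContinuousMap.sub_apply, ContinuousMap.neg_apply, ContinuousMap.add_apply,
          Real.norm_eq_abs, sub_neg_eq_add]
        linarith
      have e1 : |T f (yσ σ) - T (fσ σ) (yσ σ)| ≤ M * B + L := by
        calc |T f (yσ σ) - T (fσ σ) (yσ σ)| = ‖(T f - T (fσ σ)) (yσ σ)‖ := by
              simp [Real.norm_eq_abs]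
          _ ≤ ‖T f - T (fσ σ)‖ := (T f - T (fσ σ)).norm_coe_le_norm _
          _ ≤ M * ‖f - fσ σ‖ + L := hTup _ _
          _ ≤ M * B + L := by nlinarith
      have e2 : |T f (yσ σ) - T (-(fσ σ)) (yσ σ)| ≤ M * B + L := by
        calc |T f (yσ σ) - T (-(fσ σ)) (yσ σ)| = ‖(T f - T (-(fσ σ))) (yσ σ)‖ := by
              simp [Real.norm_eq_abs]
          _ ≤ ‖T f - T (-(fσ σ))‖ := (T f - T (-(fσ σ))).norm_coe_le_norm _
          _ ≤ M * ‖f - -(fσ σ)‖ + L := hTup _ _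
          _ ≤ M * B + L := by nlinarith
      obtain ⟨hd1, hd2⟩ := hineq σ
      have e1' := abs_le.mp e1
      have e2' := abs_le.mp e2
      rw [abs_le]
      constructor
      · linarith [e1'.2]
      · linarith [e2'.1]
    have hlim : Tendsto (fun σ => |T f (yσ σ)|) atTop (𝓝 |T f y|) :=
      (((T f).continuous.tendsto y).comp hconv).abs
    exact le_of_tendsto hlim hbound
  have h2 : |T f y| ≤ M * (|f x| + m) - D * m + L := by
    apply le_of_forall_pos_le_add
    intro ε hε
    have hδ : 0 < ε / M := div_pos hε hMpos
    have := key (ε / M) hδ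
    have hMδ : M * (ε / M) = ε := by field_simp
    nlinarith [this]
  nlinarith [h2, hfx, hM1, hm0]
end

section
/- In the coarse Banach-Stone setup with 1 − ε(M) − ε(M)M > 0, the map φ : X → Y defined by {φ(x)} = S^D_m(x) (for m large) is continuous, and since ψ : Y → X is its two-sided inverse, φ is a homeomorphism of X onto Y. -/
/-!
Since `Y` is compact, `φ` is continuous at `x` as soon as `φ x` is its only cluster point there.
If `φ x' ≠ φ x` were another one, take `f` with `‖f‖ = f x = m` large and `f x' = 0`. The lower
estimate `|f| - a‖f‖ - b ≤ |T f ∘ φ|` passes to the cluster point and gives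
`|T f (φ x')| ≥ (1 - a) m - b`, while the upper estimate at `x'` gives `|T f (φ x')| ≤ c m + d`;
for `a + c < 1` and `m` large these are incompatible. Here `a = ε(M) M` and `c = ε(M)`.
A continuous bijection from a compact space onto a Hausdorff space is a homeomorphism.
-/

open Filter Topology

section PeakContinuity

variable {X Y : Type*} [TopologicalSpace X] [TopologicalSpace Y]

theorem MapClusterPt.le_of_forall_le {α : Type*} [TopologicalSpace α] [Preorder α]
    [OrderClosedTopology α] {φ : X → Y} {x : X} {y : Y} (hy : MapClusterPt y (𝓝 x) φ)
    {u : X → α} {v : Y → α} (hu : ContinuousAt u x) (hv : ContinuousAt v y)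
    (huv : ∀ z, u z ≤ v (φ z)) : u x ≤ v y := by
  have : (𝓝 x ⊓ comap φ (𝓝 y)).NeBot := by
    rw [← map_neBot_iff φ, Filter.push_pull, inf_comm]
    exact hy
  exact le_of_tendsto_of_tendsto (hu.tendsto.mono_left inf_le_left)
    (hv.tendsto.comp (tendsto_comap.mono_left inf_le_right)) (Eventually.of_forall huv)

theorem ContinuousMap.exists_norm_eq_apply_eq_apply_eq_zero [CompactSpace X] [T2Space X]
    {x x' : X} (hxx' : x ≠ x') {m : ℝ} (hm : 0 ≤ m) :
    ∃ f : C(X, ℝ), ‖f‖ = m ∧ f x = m ∧ f x' = 0 := by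
  obtain ⟨g, hg₀, hg₁, hg⟩ := exists_continuous_zero_one_of_isClosed isClosed_singleton
    isClosed_singleton (Set.disjoint_singleton.2 hxx'.symm)
  have hgx : g x = 1 := hg₁ rfl
  have hg_norm : ‖g‖ = 1 := by
    refine le_antisymm ((ContinuousMap.norm_le _ zero_le_one).2 fun z => ?_) ?_
    · rw [Real.norm_eq_abs, abs_le]
      exact ⟨by linarith [(hg z).1], (hg z).2⟩
    · simpa [hgx] using g.norm_coe_le_norm x
  refine ⟨m • g, ?_, by simp [hgx], by simp [hg₀ rfl]⟩
  rw [norm_smul, hg_norm, Real.norm_of_nonneg hm, mul_one]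

theorem continuous_of_abs_apply_comp_estimate [CompactSpace X] [T2Space X] [CompactSpace Y]
    {φ : X → Y} (hφ : Function.Surjective φ) (T : C(X, ℝ) → C(Y, ℝ)) {a b c d m₂ : ℝ}
    (hac : 0 < 1 - a - c)
    (hest : ∀ f : C(X, ℝ), m₂ ≤ ‖f‖ → ∀ x : X,
      |f x| - a * ‖f‖ - b ≤ |T f (φ x)| ∧ |T f (φ x)| ≤ |f x| + c * ‖f‖ + d) :
    Continuous φ := by
  refine continuous_iff_continuousAt.2 fun x => tendsto_nhds_of_unique_mapClusterPt ?_
  intro y hy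
  by_contra hne
  obtain ⟨x', rfl⟩ := hφ y
  obtain ⟨m, hm⟩ := exists_gt (max (max m₂ 0) ((b + d) / (1 - a - c)))
  simp only [max_lt_iff, div_lt_iff₀ hac] at hm
  obtain ⟨f, hf_norm, hfx, hfx'⟩ := ContinuousMap.exists_norm_eq_apply_eq_apply_eq_zero
    (fun h => hne (congrArg φ h).symm) hm.1.2.le
  have hm₂ : m₂ ≤ ‖f‖ := hf_norm ▸ hm.1.1.le
  have hlow : |f x| - a * ‖f‖ - b ≤ |T f (φ x')| :=
    hy.le_of_forall_le (u := fun z => |f z| - a * ‖f‖ - b) (v := fun y => |T f y|)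
      (by fun_prop) (by fun_prop) fun z => (hest f hm₂ z).1
  have hup := (hest f hm₂ x').2
  rw [hf_norm, hfx, abs_of_nonneg hm.1.2.le] at hlow
  rw [hf_norm, hfx', abs_zero] at hup
  linarith

end PeakContinuity

theorem stmt_11_general {X Y : Type} [TopologicalSpace X] [CompactSpace X] [T2Space X]
    [TopologicalSpace Y] [CompactSpace Y] [T2Space Y]
    (M L D : ℝ)
    (T : C(X, ℝ) → C(Y, ℝ))
    (hε : 0 < 1 - (2 * M - 1 - D) * M - (2 * M - 1 - D))
    (φ : X → Y) (ψ : Y → X)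
    (hφψ : Function.LeftInverse ψ φ) (hψφ : Function.RightInverse ψ φ)
    (m₂ : ℝ)
    (hest : ∀ f : C(X, ℝ), m₂ ≤ ‖f‖ → ∀ x : X,
      |f x| - (2 * M - 1 - D) * M * ‖f‖ - ((2 * M - 1 - D) + 1) * L ≤ |T f (φ x)| ∧
      |T f (φ x)| ≤ |f x| + (2 * M - 1 - D) * ‖f‖ + L) :
    Continuous φ ∧ IsHomeomorph φ := by
  have hcont : Continuous φ := continuous_of_abs_apply_comp_estimate hψφ.surjective T hε hest
  exact ⟨hcont, isHomeomorph_iff_continuous_bijective.2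
    ⟨hcont, hφψ.injective, hψφ.surjective⟩⟩

/-- The map `φ` obtained from `S^D_m` is continuous, and (having the two-sided inverse `ψ`)
is a homeomorphism of `X` onto `Y`. -/
theorem stmt_11 {X Y : Type} [TopologicalSpace X] [CompactSpace X] [T2Space X]
    [TopologicalSpace Y] [CompactSpace Y] [T2Space Y]
    (M L D : ℝ) (hM1 : 1 ≤ M) (hM2 : M < Real.sqrt 2) (hL : 0 ≤ L)
    (hD0 : 0 < D) (hD : D < 2 / M - M)
    (T : C(X, ℝ) → C(Y, ℝ)) (T' : C(Y, ℝ) → C(X, ℝ))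
    (hbij : Function.Bijective T) (h0 : T 0 = 0)
    (hinv₁ : Function.LeftInverse T' T) (hinv₂ : Function.RightInverse T' T)
    (hTlow : ∀ f g : C(X, ℝ), (1 / M) * ‖f - g‖ - L ≤ ‖T f - T g‖)
    (hTup : ∀ f g : C(X, ℝ), ‖T f - T g‖ ≤ M * ‖f - g‖ + L)
    (hT'low : ∀ f g : C(Y, ℝ), (1 / M) * ‖f - g‖ - L ≤ ‖T' f - T' g‖)
    (hT'up : ∀ f g : C(Y, ℝ), ‖T' f - T' g‖ ≤ M * ‖f - g‖ + L)
    (hε : 0 < 1 - (2 * M - 1 - D) * M - (2 * M - 1 - D))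
    (m₁ : ℝ) (hm₁ : 0 ≤ m₁)
    (φ : X → Y) (ψ : Y → X)
    (hφ : ∀ m : ℝ, M * m₁ + L < m → ∀ x : X, SD T D m x = {φ x})
    (hψ : ∀ m : ℝ, M * m₁ + L < m → ∀ y : Y, SD T' D m y = {ψ y})
    (hφψ : Function.LeftInverse ψ φ) (hψφ : Function.RightInverse ψ φ)
    (m₂ : ℝ) (hm₂ : 0 ≤ m₂)
    (hest : ∀ f : C(X, ℝ), m₂ ≤ ‖f‖ → ∀ x : X,
      |f x| - (2 * M - 1 - D) * M * ‖f‖ - ((2 * M - 1 - D) + 1) * L ≤ |T f (φ x)| ∧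
      |T f (φ x)| ≤ |f x| + (2 * M - 1 - D) * ‖f‖ + L) :
    Continuous φ ∧ IsHomeomorph φ :=
  stmt_11_general M L D T hε φ ψ hφψ hψφ m₂ hest
end

section
/- If X and Y are compact Hausdorff spaces and there exists a bi-Lipschitz bijection T : C(X) → C(Y) with T(0) = 0 satisfying (1/M)‖f−g‖ ≤ ‖Tf−Tg‖ ≤ M‖f−g‖ for M < √1.2, then there is a homeomorphism φ : X → Y such that | |Tf(φ(x))| − |f(x)| | ≤ 5(M²−M)‖f‖ for all f ∈ C(X) and x ∈ X. -/
/-!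
Let `S = T⁻¹`, so that `T` and `S` are both `M`-Lipschitz. Fix a scale `s > 0` and a function `w`
of norm `M s` supported near `x ∈ X`. Since `‖T w - T (-w)‖ ≥ 2 s` while `‖T (±w)‖ ≤ M² s`, at
some point of `Y` the values of `T w` and `T (-w)` lie beyond `(2 - M²) s` on opposite sides. Call
`y` linked to `x` if it is a limit of such points as the support of `w` shrinks to `x`; comparing
`f` with `±w` gives `|T f y| ≤ M |f x| + 2 (M² - 1) s` whenever `‖f‖ ≤ M s`.

Linking is symmetric in `T` and `S`: otherwise an Urysohn function peaking off the support of `w`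
would be moved by `T` further than `M` allows. With both bounds, an Urysohn function separating two
points shows that the point linked to `x` is unique, even across scales within a factor `5/4`,
hence across all scales. Linking is a closed relation, so `x ↦ y` is a homeomorphism, and the two
bounds at scale `‖f‖` give the estimate. The hypothesis `M² < 6/5` keeps all these comparisons
strict.
-/

open Set Filter Topology Function

namespace BanachStone

section CompactSpace

variable {Z : Type*} [TopologicalSpace Z] [CompactSpace Z]

lemma abs_apply_le_norm (g : C(Z, ℝ)) (z : Z) : |g z| ≤ ‖g‖ := g.norm_coe_le_norm z

lemma abs_sub_apply_le_norm_sub (f g : C(Z, ℝ)) (z : Z) : |f z - g z| ≤ ‖f - g‖ :=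
  (f - g).norm_coe_le_norm z

lemma exists_abs_apply_eq_norm {g : C(Z, ℝ)} (hg : 0 < ‖g‖) : ∃ z, |g z| = ‖g‖ := by
  rcases isEmpty_or_nonempty Z with hZ | hZ
  · have : ‖g‖ ≤ 0 := (g.norm_le le_rfl).mpr isEmptyElim
    linarith
  obtain ⟨z, -, hz⟩ :=
    isCompact_univ.exists_isMaxOn univ_nonempty (map_continuous g).abs.continuousOn
  exact ⟨z, le_antisymm (abs_apply_le_norm g z)
    ((g.norm_le (abs_nonneg _)).mpr fun y => hz (mem_univ y))⟩

lemma norm_sub_le_of_abs_le_on_support {f w : C(Z, ℝ)} {a r : ℝ} (hf : ‖f‖ ≤ a)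
    (hw : ‖w‖ ≤ a) (hr : 0 ≤ r) (hsupp : ∀ z, w z ≠ 0 → |f z| ≤ r) : ‖f - w‖ ≤ a + r := by
  refine ((f - w).norm_le (by linarith [norm_nonneg f])).mpr fun z => ?_
  rw [ContinuousMap.sub_apply, Real.norm_eq_abs]
  by_cases hz : w z = 0
  · rw [hz, sub_zero]
    linarith [abs_apply_le_norm f z]
  · calc |f z - w z| ≤ |f z| + |w z| := abs_sub _ _
      _ ≤ r + a := add_le_add (hsupp z hz) ((abs_apply_le_norm w z).trans hw)
      _ = a + r := add_comm r a

variable [T2Space Z]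

lemma exists_norm_le_one_apply_eq_one_eqOn_zero {C : Set Z} (hC : IsClosed C) {z : Z}
    (hz : z ∉ C) : ∃ p : C(Z, ℝ), ‖p‖ ≤ 1 ∧ p z = 1 ∧ EqOn p 0 C := by
  obtain ⟨p, hp0, hp1, hp01⟩ := exists_continuous_zero_one_of_isClosed hC isClosed_singleton
    (disjoint_singleton_right.mpr hz)
  refine ⟨p, (p.norm_le zero_le_one).mpr fun y => ?_, hp1 rfl, hp0⟩
  rw [Real.norm_eq_abs, abs_le]
  exact ⟨by linarith [(hp01 y).1], (hp01 y).2⟩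

lemma exists_norm_eq_one_support_subset {V : Set Z} {z : Z} (hV : V ∈ 𝓝 z) :
    ∃ u : C(Z, ℝ), ‖u‖ = 1 ∧ support u ⊆ V := by
  obtain ⟨u, hu, huz, hu0⟩ := exists_norm_le_one_apply_eq_one_eqOn_zero
    isOpen_interior.isClosed_compl (not_not_intro (mem_interior_iff_mem_nhds.mpr hV))
  refine ⟨u, le_antisymm hu ?_, fun y hy => interior_subset (not_not.mp fun h => hy (hu0 h))⟩
  simpa [huz] using abs_apply_le_norm u z

end CompactSpace

lemma eq_of_rel_of_forall_near_scales {β : Type*} {R : ℝ → β → Prop} {q : ℝ} (hq : 1 < q)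
    (hex : ∀ s, 0 < s → ∃ b, R s b)
    (hnear : ∀ s t b b', 0 < s → s ≤ t → t ≤ q * s → R s b → R t b' → b = b')
    {s t : ℝ} {b b' : β} (hs : 0 < s) (ht : 0 < t) (hb : R s b) (hb' : R t b') : b = b' := by
  wlog hst : s ≤ t
  · exact (this hq hex hnear ht hs hb' hb (le_of_not_ge hst)).symm
  have hchain (n : ℕ) :
      ∀ s t b b', 0 < s → s ≤ t → t ≤ q ^ n * s → R s b → R t b' → b = b' := by
    induction n with
    | zero => exact fun s t b b' hs hst hts => hnear s t b b' hs hst (by nlinarith)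
    | succ n ih =>
      intro s t b b' hs hst hts hb hb'
      rcases le_total t (q * s) with h | h
      · exact hnear s t b b' hs hst h hb hb'
      obtain ⟨c, hc⟩ := hex (q * s) (by positivity)
      exact (hnear s (q * s) b c hs (by nlinarith) le_rfl hb hc).trans
        (ih (q * s) t c b' (by positivity) h (by rw [pow_succ] at hts; linarith) hc hb')
  obtain ⟨n, hn⟩ := pow_unbounded_of_one_lt (t / s) hq
  exact hchain n s t b b' hs hst (by rw [div_lt_iff₀ hs] at hn; linarith) hb hb'

lemma continuous_of_isClosed_graph {X Y : Type*} [TopologicalSpace X] [TopologicalSpace Y]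
    [CompactSpace Y] {φ : X → Y} (h : IsClosed {p : X × Y | φ p.1 = p.2}) : Continuous φ := by
  refine continuous_iff_isClosed.mpr fun C hC => ?_
  convert isClosedMap_fst_of_compactSpace _ (h.inter (isClosed_univ.prod hC)) using 1
  ext x
  exact ⟨fun hx => ⟨(x, φ x), ⟨rfl, trivial, hx⟩, rfl⟩,
    by rintro ⟨⟨x, y⟩, ⟨hxy, -, hy⟩, rfl⟩; rwa [mem_preimage, hxy]⟩

structure IsBiLipschitz {E F : Type*} [SeminormedAddCommGroup E] [SeminormedAddCommGroup F]
    (M : ℝ) (e : E ≃ F) : Prop where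
  lipschitz : ∀ a b, ‖e a - e b‖ ≤ M * ‖a - b‖
  lipschitz_symm : ∀ a b, ‖e.symm a - e.symm b‖ ≤ M * ‖a - b‖

namespace IsBiLipschitz

variable {E F : Type*} [SeminormedAddCommGroup E] [SeminormedAddCommGroup F] {M : ℝ}
  {e : E ≃ F}

lemma symm (h : IsBiLipschitz M e) : IsBiLipschitz M e.symm := ⟨h.lipschitz_symm, h.lipschitz⟩

lemma norm_sub_le_mul_norm_apply_sub (h : IsBiLipschitz M e) (a b : E) :
    ‖a - b‖ ≤ M * ‖e a - e b‖ := by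
  simpa using h.lipschitz_symm (e a) (e b)

lemma norm_apply_le (h : IsBiLipschitz M e) (h0 : e 0 = 0) (a : E) : ‖e a‖ ≤ M * ‖a‖ := by
  simpa [h0] using h.lipschitz a 0

end IsBiLipschitz

variable {X Y : Type*} [TopologicalSpace X] [CompactSpace X] [TopologicalSpace Y]
  {M s : ℝ}

def separatingPoints (T : C(X, ℝ) → C(Y, ℝ)) (M s : ℝ) (V : Set X) : Set Y :=
  {y | ∃ w : C(X, ℝ), ‖w‖ ≤ M * s ∧ support w ⊆ V ∧
    (2 - M ^ 2) * s ≤ T w y ∧ T (-w) y ≤ -((2 - M ^ 2) * s)}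

lemma separatingPoints_mono (T : C(X, ℝ) → C(Y, ℝ)) (M s : ℝ) :
    Monotone (separatingPoints T M s) :=
  fun _ _ hVV' _ ⟨w, hw, hwV, hpos, hneg⟩ => ⟨w, hw, hwV.trans hVV', hpos, hneg⟩

def Linked (T : C(X, ℝ) → C(Y, ℝ)) (M s : ℝ) (x : X) (y : Y) : Prop :=
  ∀ V, IsOpen V → x ∈ V → y ∈ closure (separatingPoints T M s V)

lemma isClosed_setOf_linked (T : C(X, ℝ) → C(Y, ℝ)) (M s : ℝ) :
    IsClosed {p : X × Y | Linked T M s p.1 p.2} := by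
  simp only [Linked, ofPred_forall]
  refine isClosed_iInter fun V => isClosed_iInter fun hV => ?_
  convert (hV.isClosed_compl.preimage continuous_fst).union
    ((isClosed_closure (s := separatingPoints T M s V)).preimage continuous_snd) using 1
  ext p
  simp [imp_iff_not_or]

variable [CompactSpace Y]

lemma abs_apply_le_of_mem_separatingPoints {T : C(X, ℝ) → C(Y, ℝ)}
    (hT : ∀ f g, ‖T f - T g‖ ≤ M * ‖f - g‖) (hM : 0 ≤ M) {f : C(X, ℝ)}
    (hf : ‖f‖ ≤ M * s) {V : Set X} {r : ℝ} (hr : 0 ≤ r) (hfV : ∀ z ∈ V, |f z| ≤ r) {y : Y}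
    (hy : y ∈ separatingPoints T M s V) : |T f y| ≤ M * r + 2 * (M ^ 2 - 1) * s := by
  obtain ⟨w, hw, hwV, hpos, hneg⟩ := hy
  have hnear (w' : C(X, ℝ)) (hw' : ‖w'‖ ≤ M * s) (hw'V : support w' ⊆ V) :
      |T f y - T w' y| ≤ M * (M * s + r) :=
    calc |T f y - T w' y| ≤ ‖T f - T w'‖ := abs_sub_apply_le_norm_sub _ _ y
      _ ≤ M * ‖f - w'‖ := hT f w'
      _ ≤ M * (M * s + r) := mul_le_mul_of_nonneg_left
          (norm_sub_le_of_abs_le_on_support hf hw' hr fun z hz => hfV z (hw'V hz)) hM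
  have hplus := abs_le.mp (hnear w hw hwV)
  have hminus := abs_le.mp
    (hnear (-w) (by rwa [norm_neg]) (by rwa [ContinuousMap.coe_neg, support_neg]))
  refine abs_le.mpr ⟨?_, ?_⟩ <;> nlinarith

lemma abs_apply_le_of_linked {T : C(X, ℝ) → C(Y, ℝ)}
    (hT : ∀ f g, ‖T f - T g‖ ≤ M * ‖f - g‖) (hM : 0 < M) {x : X} {y : Y}
    (h : Linked T M s x y) {f : C(X, ℝ)} (hf : ‖f‖ ≤ M * s) :
    |T f y| ≤ M * |f x| + 2 * (M ^ 2 - 1) * s := by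
  refine le_of_forall_pos_le_add fun ε hε => ?_
  set r := |f x| + ε / M
  have hV : IsOpen {z | |f z| < r} := isOpen_lt (by fun_prop) continuous_const
  have hbound : closure (separatingPoints T M s {z | |f z| < r}) ⊆
      {y | |T f y| ≤ M * r + 2 * (M ^ 2 - 1) * s} :=
    closure_minimal (fun y hy => abs_apply_le_of_mem_separatingPoints hT hM.le hf
      (by positivity) (fun z hz => le_of_lt hz) hy) (isClosed_le (by fun_prop) continuous_const)
  have hy : |T f y| ≤ M * r + 2 * (M ^ 2 - 1) * s :=
    hbound (h _ hV (by simp [r, hε, hM]))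
  have hMr : M * r = M * |f x| + ε := by simp only [r]; field_simp
  linarith

variable {e : C(X, ℝ) ≃ C(Y, ℝ)}

lemma mem_separatingPoints_of_le (hb : IsBiLipschitz M e) (he0 : e 0 = 0) (hM : 0 ≤ M)
    {w : C(X, ℝ)} (hw : ‖w‖ ≤ M * s) {V : Set X} (hwV : support w ⊆ V) {y : Y}
    (h : 2 * s ≤ e w y - e (-w) y) : y ∈ separatingPoints e M s V := by
  have hbound (w' : C(X, ℝ)) (hw' : ‖w'‖ ≤ M * s) : |e w' y| ≤ M * (M * s) :=
    (abs_apply_le_norm _ y).trans ((hb.norm_apply_le he0 w').trans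
      (mul_le_mul_of_nonneg_left hw' hM))
  have h₁ := abs_le.mp (hbound w hw)
  have h₂ := abs_le.mp (hbound (-w) (by rwa [norm_neg]))
  exact ⟨w, hw, hwV, by nlinarith, by nlinarith⟩

lemma separatingPoints_nonempty [T2Space X] (hb : IsBiLipschitz M e) (he0 : e 0 = 0)
    (hM : 0 < M) (hs : 0 < s) {V : Set X} {x : X} (hV : V ∈ 𝓝 x) :
    (separatingPoints e M s V).Nonempty := by
  obtain ⟨u, hu, huV⟩ := exists_norm_eq_one_support_subset hV
  set w := (M * s) • u
  have hw : ‖w‖ = M * s := by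
    rw [norm_smul, hu, mul_one, Real.norm_of_nonneg (by positivity)]
  have hwV : support w ⊆ V := (support_const_smul_subset _ _).trans huV
  have hgap : 2 * s ≤ ‖e w - e (-w)‖ := by
    have h := hb.norm_sub_le_mul_norm_apply_sub w (-w)
    rw [sub_neg_eq_add, ← two_smul ℝ w, norm_smul, hw, Real.norm_two] at h
    nlinarith
  obtain ⟨y, hy⟩ := exists_abs_apply_eq_norm (by linarith : 0 < ‖e w - e (-w)‖)
  rw [ContinuousMap.sub_apply] at hy
  rcases le_abs'.mp (hgap.trans hy.ge) with h | h
  · refine ⟨y, mem_separatingPoints_of_le hb he0 hM.le (w := -w) (by rw [norm_neg, hw])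
      (by rwa [ContinuousMap.coe_neg, support_neg]) ?_⟩
    rw [neg_neg]
    linarith
  · exact ⟨y, mem_separatingPoints_of_le hb he0 hM.le hw.le hwV h⟩

lemma exists_linked [T2Space X] (hb : IsBiLipschitz M e) (he0 : e 0 = 0) (hM : 0 < M)
    (hs : 0 < s) (x : X) : ∃ y, Linked e M s x y := by
  have : NeBot ((𝓝 x).lift' (separatingPoints e M s)) :=
    (lift'_neBot_iff (separatingPoints_mono e M s)).mpr fun V hV =>
      separatingPoints_nonempty hb he0 hM hs hV
  obtain ⟨y, hy⟩ := exists_clusterPt_of_compactSpace ((𝓝 x).lift' (separatingPoints e M s))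
  exact ⟨y, fun V hV hxV => hy.mem_closure_of_mem _ (mem_lift' (hV.mem_nhds hxV))⟩

lemma abs_apply_sub_apply_le_of_disjoint {T : C(X, ℝ) → C(Y, ℝ)}
    (hT : ∀ f g, ‖T f - T g‖ ≤ M * ‖f - g‖) (hM : 0 ≤ M) {lam : ℝ} {w q : C(X, ℝ)}
    (hw : ‖w‖ ≤ lam) (hq : ‖q‖ ≤ lam) (hwq : ∀ z, w z ≠ 0 → q z = 0) (y : Y) :
    |T w y - T q y| ≤ M * lam :=
  calc |T w y - T q y| ≤ ‖T w - T q‖ := abs_sub_apply_le_norm_sub _ _ y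
    _ ≤ M * ‖q - w‖ := norm_sub_rev w q ▸ hT w q
    _ ≤ M * lam := by
      simpa using mul_le_mul_of_nonneg_left
        (norm_sub_le_of_abs_le_on_support hq hw le_rfl fun z hz => by simp [hwq z hz]) hM

lemma mem_tsupport_of_apply_symm_le [T2Space X] (hb : IsBiLipschitz M e) (he0 : e 0 = 0)
    (hM : 0 < M) {lam c c' : ℝ} (hlam : 0 ≤ lam) (hc : M ^ 2 * lam < lam + c)
    (hc' : M * lam + M ^ 2 * lam ≤ lam + c + M * c') {w : C(X, ℝ)} (hw : ‖w‖ ≤ lam)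
    {k : C(Y, ℝ)} (hk : ‖k‖ ≤ lam) (hsep : ∀ y, k y ≠ 0 → c' < e w y ∧ e (-w) y < -c')
    {x : X} (hx : e.symm k x ≤ -c) : x ∈ tsupport w := by
  by_contra hxw
  obtain ⟨p, hp, hpx, hpw⟩ :=
    exists_norm_le_one_apply_eq_one_eqOn_zero (isClosed_tsupport w) hxw
  set q := lam • p
  have hq : ‖q‖ ≤ lam := by
    rw [norm_smul, Real.norm_of_nonneg hlam]
    exact mul_le_of_le_one_right hlam hp
  have hwq : ∀ z, w z ≠ 0 → q z = 0 := fun z hz => by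
    simp [q, hpw (subset_tsupport w hz)]
  have hfar : lam + c ≤ M * ‖e q - k‖ :=
    calc lam + c ≤ |q x - e.symm k x| := by
          rw [show q x = lam by simp [q, hpx]]
          exact le_abs.mpr (Or.inl (by linarith))
      _ ≤ ‖q - e.symm k‖ := abs_sub_apply_le_norm_sub _ _ x
      _ ≤ M * ‖e q - k‖ := by simpa using hb.norm_sub_le_mul_norm_apply_sub q (e.symm k)
  obtain ⟨y, hy⟩ := exists_abs_apply_eq_norm (g := e q - k)
    (pos_of_mul_pos_right (by nlinarith) hM.le)
  rw [← hy, ContinuousMap.sub_apply] at hfar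
  have hqy : |e q y| ≤ M * lam := (abs_apply_le_norm _ y).trans
    ((hb.norm_apply_le he0 q).trans (mul_le_mul_of_nonneg_left hq hM.le))
  have hky := abs_le.mp ((abs_apply_le_norm k y).trans hk)
  by_cases hk0 : k y = 0
  · rw [hk0, sub_zero] at hfar
    nlinarith
  -- `e q` is `M lam`-close to both `e w` and `e (-w)`, which lie beyond `±c'` at `y`.
  obtain ⟨hpos, hneg⟩ := hsep y hk0
  have h₁ := abs_le.mp (abs_apply_sub_apply_le_of_disjoint hb.lipschitz hM.le hw hq hwq y)
  have h₂ := abs_le.mp (abs_apply_sub_apply_le_of_disjoint hb.lipschitz hM.le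
    (w := -w) (by rwa [norm_neg]) hq (fun z hz => hwq z (by simpa using hz)) y)
  rcases abs_cases (e q y - k y) with ⟨habs, -⟩ | ⟨habs, -⟩ <;> rw [habs] at hfar
  · have : e q y - k y < M * lam + lam - c' := by linarith
    nlinarith [mul_lt_mul_of_pos_left this hM]
  · have : -(e q y - k y) < M * lam + lam - c' := by linarith
    nlinarith [mul_lt_mul_of_pos_left this hM]

lemma Linked.symm [T2Space X] [T2Space Y] (hb : IsBiLipschitz M e) (he0 : e 0 = 0)
    (hM : 1 ≤ M) (hM' : M ^ 2 ≤ 6 / 5) (hs : 0 < s) {x : X} {y : Y} (h : Linked e M s x y) :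
    Linked e.symm M s y x := by
  intro V hV hyV
  refine mem_closure_iff_nhds.mpr fun W hW => ?_
  obtain ⟨t, ht, htc, htW⟩ := exists_mem_nhds_isClosed_subset hW
  obtain ⟨U, hUt, hU, hxU⟩ := mem_nhds_iff.mp ht
  obtain ⟨y', hy'V, w, hw, hwU, hpos, hneg⟩ := mem_closure_iff.mp (h U hU hxU) V hV hyV
  -- Any level below `(2 - M²) s` makes `Ω` a neighbourhood of `y'`; `7/10 s` is also high enough
  -- for the numerical hypothesis of `mem_tsupport_of_apply_symm_le`.
  set Ω := V ∩ {z | 7 / 10 * s < e w z} ∩ {z | e (-w) z < -(7 / 10 * s)}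
  have hΩ : IsOpen Ω := (hV.inter (isOpen_lt continuous_const (map_continuous _))).inter
    (isOpen_lt (map_continuous _) continuous_const)
  have hy'Ω : y' ∈ Ω := ⟨⟨hy'V, by simp only [mem_ofPred_eq]; nlinarith⟩, by
    simp only [mem_ofPred_eq]; nlinarith⟩
  obtain ⟨x', k, hk, hkΩ, hkpos, hkneg⟩ := separatingPoints_nonempty hb.symm
    (e.symm_apply_eq.mpr he0.symm) (by linarith) hs (hΩ.mem_nhds hy'Ω)
  have hx' : x' ∈ tsupport w := by
    refine mem_tsupport_of_apply_symm_le hb he0 (by linarith) (lam := M * s)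
      (c := (2 - M ^ 2) * s) (c' := 7 / 10 * s) (by positivity)
      (by nlinarith [mul_pos hs (by nlinarith : 0 < M + 2 - M ^ 2 - M ^ 3)])
      (by nlinarith [mul_nonneg hs.le
            (by nlinarith : 0 ≤ 2 + 17 / 10 * M - 2 * M ^ 2 - M ^ 3)])
      hw (k := -k) (by rwa [norm_neg]) (fun z hz => ?_) hkneg
    have hzΩ : z ∈ Ω := hkΩ (by simpa using hz)
    exact ⟨hzΩ.1.2, hzΩ.2⟩
  exact ⟨x', htW (closure_minimal (hwU.trans hUt) htc hx'), k, hk,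
    hkΩ.trans (inter_subset_left.trans inter_subset_left), hkpos, hkneg⟩

lemma eq_of_linked_of_linked [T2Space X] [T2Space Y] (hb : IsBiLipschitz M e) (he0 : e 0 = 0)
    (hM : 1 ≤ M) (hM' : M ^ 2 ≤ 6 / 5) {s t : ℝ} (hs : 0 < s) (hst : s ≤ t)
    (hts : t ≤ 5 / 4 * s) {x : X} {y y' : Y} (hy : Linked e M s x y) (hy' : Linked e M t x y') :
    y = y' := by
  by_contra hne
  obtain ⟨h, hh, hhy, hhy'⟩ :=
    exists_norm_le_one_apply_eq_one_eqOn_zero isClosed_singleton (mem_singleton_iff.not.mpr hne)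
  set g := s • h
  have hg : ‖g‖ ≤ s := by
    rw [norm_smul, Real.norm_of_nonneg hs.le]
    exact mul_le_of_le_one_right hs.le hh
  have h₁ := abs_apply_le_of_linked hb.lipschitz (by linarith) hy (f := e.symm g)
    ((hb.symm.norm_apply_le (e.symm_apply_eq.mpr he0.symm) g).trans
      (mul_le_mul_of_nonneg_left hg (by linarith)))
  have h₂ := abs_apply_le_of_linked hb.symm.lipschitz (by linarith)
    (hy'.symm hb he0 hM hM' (by linarith)) (f := g) (by nlinarith)
  simp only [Equiv.apply_symm_apply, g, ContinuousMap.smul_apply, smul_eq_mul, hhy,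
    hhy' rfl, Pi.zero_apply, mul_one, mul_zero, abs_zero, abs_of_pos hs] at h₁ h₂
  have h₃ : |e.symm (s • h) x| ≤ 5 / 2 * (M ^ 2 - 1) * s := by
    nlinarith [mul_le_mul_of_nonneg_left hts (by nlinarith : 0 ≤ 2 * (M ^ 2 - 1))]
  have hM₁ : M ≤ 11 / 10 := by nlinarith
  have hnum : (M ^ 2 - 1) * (5 / 2 * M + 2) < 1 := by
    nlinarith [mul_le_mul_of_nonneg_left hM₁ (by nlinarith : 0 ≤ M ^ 2 - 1)]
  nlinarith [mul_le_mul_of_nonneg_left h₃ (by linarith : 0 ≤ M),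
    mul_lt_mul_of_pos_right hnum hs]

lemma abs_abs_apply_sub_abs_apply_le [T2Space X] [T2Space Y] (hb : IsBiLipschitz M e)
    (he0 : e 0 = 0) (hM : 1 ≤ M) (hM' : M ^ 2 ≤ 6 / 5) (hs : 0 < s) {x : X} {y : Y}
    (h : Linked e M s x y) {f : C(X, ℝ)} (hf : ‖f‖ ≤ s) :
    |(|e f y| - |f x|)| ≤ 5 * (M ^ 2 - M) * s := by
  have hef : ‖e f‖ ≤ M * s :=
    (hb.norm_apply_le he0 f).trans (mul_le_mul_of_nonneg_left hf (by linarith))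
  have h₁ := abs_apply_le_of_linked hb.lipschitz (by linarith) h (f := f) (by nlinarith)
  have h₂ :=
    abs_apply_le_of_linked hb.symm.lipschitz (by linarith) (h.symm hb he0 hM hM' hs) hef
  rw [Equiv.symm_apply_apply] at h₂
  have hfx := (abs_apply_le_norm f x).trans hf
  have hefy := (abs_apply_le_norm (e f) y).trans hef
  have hM₁ : 0 ≤ M - 1 := by linarith
  refine abs_le.mpr ⟨?_, ?_⟩
  · nlinarith [mul_le_mul_of_nonneg_left hefy hM₁, mul_nonneg hs.le (sq_nonneg (M - 1))]
  · nlinarith [mul_le_mul_of_nonneg_left hfx hM₁, mul_nonneg hs.le (sq_nonneg (M - 1))]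

theorem exists_homeomorph_forall_linked [T2Space X] [T2Space Y] (hb : IsBiLipschitz M e)
    (he0 : e 0 = 0) (hM : 1 ≤ M) (hM' : M ^ 2 ≤ 6 / 5) :
    ∃ φ : X ≃ₜ Y, ∀ s, 0 < s → ∀ x, Linked e M s x (φ x) := by
  have hM₀ : 0 < M := by linarith
  have hS0 : e.symm 0 = 0 := e.symm_apply_eq.mpr he0.symm
  have huniq (x : X) {s t : ℝ} {y y' : Y} (hs : 0 < s) (ht : 0 < t) :
      Linked e M s x y → Linked e M t x y' → y = y' :=
    eq_of_rel_of_forall_near_scales (R := fun s y => Linked e M s x y) (by norm_num)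
      (fun s hs => exists_linked hb he0 hM₀ hs x)
      (fun _ _ _ _ hs hst hts => eq_of_linked_of_linked hb he0 hM hM' hs hst hts) hs ht
  choose φ hφ using fun x => exists_linked hb he0 hM₀ one_pos x
  have hφs (s : ℝ) (hs : 0 < s) (x : X) : Linked e M s x (φ x) := by
    obtain ⟨y, hy⟩ := exists_linked hb he0 hM₀ hs x
    rwa [huniq x hs one_pos hy (hφ x)] at hy
  have hinj : Injective φ := fun x x' hxx' =>
    eq_of_linked_of_linked hb.symm hS0 hM hM' one_pos le_rfl (by norm_num)
      ((hφ x).symm hb he0 hM hM' one_pos) (hxx' ▸ (hφ x').symm hb he0 hM hM' one_pos)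
  have hsurj : Surjective φ := fun y => by
    obtain ⟨x, hx⟩ := exists_linked hb.symm hS0 hM₀ one_pos y
    exact ⟨x, (huniq x one_pos one_pos (hx.symm hb.symm hS0 hM hM' one_pos) (hφ x)).symm⟩
  have hgraph : {p : X × Y | φ p.1 = p.2} = {p | Linked e M 1 p.1 p.2} := by
    ext ⟨x, y⟩
    exact ⟨fun (h : φ x = y) => h ▸ hφ x, huniq x one_pos one_pos (hφ x)⟩
  have hcont : Continuous φ :=
    continuous_of_isClosed_graph (hgraph ▸ isClosed_setOf_linked e M 1)
  let φ' : X ≃ Y := Equiv.ofBijective φ ⟨hinj, hsurj⟩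
  exact ⟨(show Continuous φ' from hcont).homeoOfEquivCompactToT2, hφs⟩

end BanachStone

open BanachStone

/-- The Lipschitz (`L = 0`) case of the coarse Banach-Stone theorem. -/
theorem stmt_14 {X Y : Type} [TopologicalSpace X] [CompactSpace X] [T2Space X]
    [TopologicalSpace Y] [CompactSpace Y] [T2Space Y]
    (M : ℝ) (hM1 : 1 ≤ M) (hM2 : M < Real.sqrt 1.2)
    (T : C(X, ℝ) → C(Y, ℝ)) (hbij : Function.Bijective T) (h0 : T 0 = 0)
    (hTlow : ∀ f g : C(X, ℝ), (1 / M) * ‖f - g‖ ≤ ‖T f - T g‖)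
    (hTup : ∀ f g : C(X, ℝ), ‖T f - T g‖ ≤ M * ‖f - g‖) :
    ∃ φ : X ≃ₜ Y, ∀ (f : C(X, ℝ)) (x : X),
      abs (|T f (φ x)| - |f x|) ≤ 5 * (M ^ 2 - M) * ‖f‖ := by
  have hM' : M ^ 2 ≤ 6 / 5 := by
    have := (Real.lt_sqrt (by linarith)).mp hM2
    norm_num at this
    linarith
  set e := Equiv.ofBijective T hbij
  have hb : IsBiLipschitz M e := ⟨hTup, fun a b => by
    have h := hTlow (e.symm a) (e.symm b)
    rw [show T = e from rfl, e.apply_symm_apply, e.apply_symm_apply, one_div,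
      inv_mul_le_iff₀ (by linarith)] at h
    exact h⟩
  obtain ⟨φ, hφ⟩ := exists_homeomorph_forall_linked hb h0 hM1 hM'
  refine ⟨φ, fun f x => ?_⟩
  rcases (norm_nonneg f).eq_or_lt with hf | hf
  · simp [norm_eq_zero.mp hf.symm, h0]
  · exact abs_abs_apply_sub_abs_apply_le hb h0 hM1 hM' hf (hφ _ hf x) le_rfl
end
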